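/- arXiv:2104.15138 — 3 statements merged into one kernel-verified Lean document; each statement's English description precedes it below -/
import Mathlib

section
/- Let A be an n×n column-stochastic matrix with all entries strictly positive. Then the system A ρ = ρ, ρ · 𝟏 = 1 has a unique solution ρ, and this ρ has all entries strictly positive. -/
/-!
Since `A` has positive entries, `|A v| ≤ A |v|` entrywise, and `A` preserves coordinate sums, so
for a fixed vector `v` the vector `|v|` is fixed as well. A nonzero nonnegative fixed vector of a
positive matrix is strictly positive; applied to `|v|` and to `|v| + v` this shows that a nonzero
fixed vector has all entries of one strict sign, hence a nonzero coordinate sum. This gives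
uniqueness of the normalized fixed vector and its positivity, while existence comes from
`det (A - 1) = 0`, as `𝟏ᵀ (A - 1) = 0`.
-/

open Matrix Finset

namespace Matrix

variable {R ι : Type*} [Field R] [Fintype ι] {A : Matrix ι ι R}

section

variable [DecidableEq ι]

theorem exists_mulVec_eq_self_of_one_vecMul_eq_one [Nonempty ι] (hA : 1 ᵥ* A = 1) :
    ∃ v ≠ 0, A *ᵥ v = v := by
  have hdet : (A - 1).det = 0 :=
    exists_vecMul_eq_zero_iff.mp ⟨1, one_ne_zero, by rw [vecMul_sub, hA, vecMul_one, sub_self]⟩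
  obtain ⟨v, hv_ne, hv⟩ := exists_mulVec_eq_zero_iff.mpr hdet
  exact ⟨v, hv_ne, by rwa [sub_mulVec, one_mulVec, sub_eq_zero] at hv⟩

end

variable [LinearOrder R] [IsStrictOrderedRing R] {v : ι → R}

theorem abs_mulVec_le_mulVec_abs (hA : ∀ i j, 0 ≤ A i j) (v : ι → R) (i : ι) :
    |(A *ᵥ v) i| ≤ (A *ᵥ |v|) i :=
  calc |(A *ᵥ v) i| = |∑ j, A i j * v j| := rfl
    _ ≤ ∑ j, |A i j * v j| := abs_sum_le_sum_abs _ _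
    _ = (A *ᵥ |v|) i := by
      refine sum_congr rfl fun j _ => ?_
      rw [abs_mul, abs_of_nonneg (hA i j), Pi.abs_apply]

theorem pos_of_mulVec_eq_self_of_nonneg (hpos : ∀ i j, 0 < A i j) (hv : A *ᵥ v = v)
    (hv_nonneg : 0 ≤ v) (hv_ne : v ≠ 0) (i : ι) : 0 < v i := by
  obtain ⟨j, hj⟩ := Function.ne_iff.mp hv_ne
  rw [← hv]
  exact sum_pos' (fun k _ => mul_nonneg (hpos i k).le (hv_nonneg k))
    ⟨j, mem_univ j, mul_pos (hpos i j) ((hv_nonneg j).lt_of_ne' hj)⟩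

variable [DecidableEq ι]

theorem mulVec_abs_eq_abs_of_mulVec_eq_self (hA : A ∈ colStochastic R ι) (hv : A *ᵥ v = v) :
    A *ᵥ |v| = |v| := by
  have hle : ∀ i ∈ univ, |v| i ≤ (A *ᵥ |v|) i := fun i _ => by
    simpa only [hv, Pi.abs_apply] using
      abs_mulVec_le_mulVec_abs (A := A) (fun _ _ => nonneg_of_mem_colStochastic hA) v i
  have hsum : ∑ i, |v| i = ∑ i, (A *ᵥ |v|) i := (sum_mulVec_of_mem_colStochastic hA).symm
  exact funext fun i => (((sum_eq_sum_iff_of_le hle).mp hsum) i (mem_univ i)).symm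

theorem pos_or_neg_of_mulVec_eq_self (hA : A ∈ colStochastic R ι) (hpos : ∀ i j, 0 < A i j)
    (hv : A *ᵥ v = v) (hv_ne : v ≠ 0) : (∀ i, 0 < v i) ∨ (∀ i, v i < 0) := by
  have habs : A *ᵥ |v| = |v| := mulVec_abs_eq_abs_of_mulVec_eq_self hA hv
  have habs_pos : ∀ i, 0 < |v| i :=
    pos_of_mulVec_eq_self_of_nonneg hpos habs (abs_nonneg v) ((Pi.abs_eq_zero v).not.mpr hv_ne)
  -- `|v| + v` is twice the positive part of `v`: it vanishes or is strictly positive.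
  have hpart : A *ᵥ (|v| + v) = |v| + v := by rw [mulVec_add, habs, hv]
  by_cases hzero : |v| + v = 0
  · right
    intro i
    have hi := congrFun hzero i
    simp only [Pi.add_apply, Pi.zero_apply, Pi.abs_apply] at hi habs_pos
    linarith [habs_pos i]
  · left
    intro i
    have hi := pos_of_mulVec_eq_self_of_nonneg hpos hpart
      (fun j => show 0 ≤ |v j| + v j from neg_le_iff_add_nonneg'.mp (neg_abs_le (v j))) hzero i
    simp only [Pi.add_apply, Pi.abs_apply] at hi
    by_contra! hvi
    linarith [abs_of_nonpos hvi]

theorem sum_ne_zero_of_mulVec_eq_self (hA : A ∈ colStochastic R ι) (hpos : ∀ i j, 0 < A i j)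
    (hv : A *ᵥ v = v) (hv_ne : v ≠ 0) : ∑ i, v i ≠ 0 := by
  obtain ⟨j, -⟩ := Function.ne_iff.mp hv_ne
  rcases pos_or_neg_of_mulVec_eq_self hA hpos hv hv_ne with h | h
  · exact (sum_pos (fun i _ => h i) ⟨j, mem_univ j⟩).ne'
  · exact (sum_neg (fun i _ => h i) ⟨j, mem_univ j⟩).ne

theorem eq_of_mulVec_eq_self_of_sum_eq (hA : A ∈ colStochastic R ι) (hpos : ∀ i j, 0 < A i j)
    {w : ι → R} (hv : A *ᵥ v = v) (hw : A *ᵥ w = w) (hsum : ∑ i, v i = ∑ i, w i) : v = w := by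
  by_contra hne
  refine sum_ne_zero_of_mulVec_eq_self hA hpos (v := v - w) (by rw [mulVec_sub, hv, hw])
    (sub_ne_zero.mpr hne) ?_
  simp only [Pi.sub_apply, sum_sub_distrib, hsum, sub_self]

theorem existsUnique_mulVec_eq_self_sum_eq_one [Nonempty ι] (hA : A ∈ colStochastic R ι)
    (hpos : ∀ i j, 0 < A i j) : ∃! ρ : ι → R, A *ᵥ ρ = ρ ∧ ∑ i, ρ i = 1 := by
  obtain ⟨v, hv_ne, hv⟩ := exists_mulVec_eq_self_of_one_vecMul_eq_one hA.2
  have hsum := sum_ne_zero_of_mulVec_eq_self hA hpos hv hv_ne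
  have hρ : A *ᵥ ((∑ i, v i)⁻¹ • v) = (∑ i, v i)⁻¹ • v := by rw [mulVec_smul, hv]
  have hρ_sum : ∑ i, ((∑ i, v i)⁻¹ • v) i = 1 := by
    simp only [Pi.smul_apply, smul_eq_mul, ← mul_sum, inv_mul_cancel₀ hsum]
  exact ⟨_, ⟨hρ, hρ_sum⟩, fun σ ⟨hσ, hσ_sum⟩ =>
    eq_of_mulVec_eq_self_of_sum_eq hA hpos hσ hρ (hσ_sum.trans hρ_sum.symm)⟩

theorem pos_of_mulVec_eq_self_of_sum_eq_one (hA : A ∈ colStochastic R ι)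
    (hpos : ∀ i j, 0 < A i j) (hv : A *ᵥ v = v) (hv_sum : ∑ i, v i = 1) (i : ι) : 0 < v i := by
  have hv_ne : v ≠ 0 := by rintro rfl; simp at hv_sum
  refine (pos_or_neg_of_mulVec_eq_self hA hpos hv hv_ne).resolve_right (fun hneg => ?_) i
  have : ∑ j, v j ≤ 0 := sum_nonpos fun j _ => (hneg j).le
  linarith

end Matrix

/-- If `A` is an `n × n` column-stochastic matrix with all entries
strictly positive, then the system `A ρ = ρ`, `ρ · 𝟏 = 1` has a unique solution `ρ`,
and this solution has all entries strictly positive. -/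
theorem stmt0 (n : ℕ) (hn : 0 < n) (A : Matrix (Fin n) (Fin n) ℝ)
    (hpos : ∀ i j, 0 < A i j)
    (hcol : ∀ j, ∑ i, A i j = 1) :
    (∃! ρ : Fin n → ℝ, A.mulVec ρ = ρ ∧ ∑ i, ρ i = 1) ∧
    (∀ ρ : Fin n → ℝ, A.mulVec ρ = ρ → ∑ i, ρ i = 1 → ∀ i, 0 < ρ i) := by
  have : Nonempty (Fin n) := Fin.pos_iff_nonempty.mp hn
  have hA : A ∈ colStochastic ℝ (Fin n) :=
    mem_colStochastic_iff_sum.mpr ⟨fun i j => (hpos i j).le, hcol⟩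
  exact ⟨existsUnique_mulVec_eq_self_sum_eq_one hA hpos,
    fun ρ hρ hρ_sum => pos_of_mulVec_eq_self_of_sum_eq_one hA hpos hρ hρ_sum⟩
end

section
/- Let A(θ) be a C¹ matrix-valued function on an open set Θ ⊆ ℝᵐ such that A(θ) is column-stochastic with strictly positive entries for every θ ∈ Θ. Then for each θ the system A(θ)ρ = ρ, ρ·𝟏 = 1 has a unique solution ρ(θ); the map θ ↦ ρ(θ) is continuously differentiable; and for each coordinate k the partial derivative ζ_k(θ) = ∂_{θ_k} ρ(θ) is the unique solution of (A(θ) − I) ζ_k = −(∂_{θ_k} A(θ)) ρ(θ) with ζ_k · 𝟏 = 0. -/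
open Matrix Finset

attribute [local instance] Matrix.normedAddCommGroup Matrix.normedSpace

/-!
If `M` is column-stochastic with positive entries, `M x = x` and `∑ x = 0` force `x = 0`:
otherwise `x` has entries of both signs, so `|M x| < M |x|` entrywise, while column sums one give
`∑ M |x| = ∑ |x|`. Hence `(A - 1) ρ = 0`, `∑ ρ = 1` has at most one solution and the square matrix
`A - 1 + 𝟏𝟏ᵀ` is invertible; `ρ = (A - 1 + 𝟏𝟏ᵀ)⁻¹ 𝟏` is then `C¹` because inversion of operators
is smooth. Differentiating `A ρ = ρ` and `∑ ρ = 1` gives the equations for `∂ₖ ρ`, and the same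
injectivity gives their uniqueness.
-/

theorem abs_sum_mul_lt_sum_mul_abs {ι : Type*} [Fintype ι] {w x : ι → ℝ} (hw : ∀ j, 0 < w j)
    {p q : ι} (hp : 0 < x p) (hq : x q < 0) : |∑ j, w j * x j| < ∑ j, w j * |x j| := by
  rw [abs_lt, ← neg_lt, ← sum_neg_distrib]
  constructor
  · refine sum_lt_sum (fun j _ => ?_) ⟨p, mem_univ _, ?_⟩
    · rw [← mul_neg]; exact mul_le_mul_of_nonneg_left (neg_le_abs _) (hw j).le
    · rw [← mul_neg]; exact mul_lt_mul_of_pos_left (by rw [abs_of_pos hp]; linarith) (hw p)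
  · refine sum_lt_sum (fun j _ => ?_) ⟨q, mem_univ _, ?_⟩
    · exact mul_le_mul_of_nonneg_left (le_abs_self _) (hw j).le
    · exact mul_lt_mul_of_pos_left (by rw [abs_of_neg hq]; linarith) (hw q)

namespace Matrix

variable {ι : Type*} [Fintype ι] [DecidableEq ι] {M : Matrix ι ι ℝ}

theorem eq_zero_of_mulVec_eq_self_of_sum_eq_zero (hM : M ∈ colStochastic ℝ ι)
    (hpos : ∀ i j, 0 < M i j) {x : ι → ℝ} (hx : M *ᵥ x = x) (hsum : ∑ i, x i = 0) :
    x = 0 := by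
  by_contra hne
  obtain ⟨p, hp⟩ : ∃ p, 0 < x p := by
    by_contra! h
    exact hne ((Fintype.sum_eq_zero_iff_of_nonpos h).1 hsum)
  obtain ⟨q, hq⟩ : ∃ q, x q < 0 := by
    by_contra! h
    exact hne ((Fintype.sum_eq_zero_iff_of_nonneg h).1 hsum)
  have hlt : ∀ i, |x i| < (M *ᵥ |x|) i := fun i => by
    simpa [← congrFun hx i, mulVec, dotProduct] using abs_sum_mul_lt_sum_mul_abs (hpos i) hp hq
  have := calc
    ∑ i, |x i| < ∑ i, (M *ᵥ |x|) i := sum_lt_sum_of_nonempty ⟨p, mem_univ _⟩ fun i _ => hlt i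
    _ = ∑ i, |x i| := sum_mulVec_of_mem_colStochastic hM
  exact lt_irrefl _ this

theorem eq_of_sub_one_mulVec_eq_of_sum_eq (hM : M ∈ colStochastic ℝ ι)
    (hpos : ∀ i j, 0 < M i j) {x y : ι → ℝ} (h : (M - 1) *ᵥ x = (M - 1) *ᵥ y)
    (hsum : ∑ i, x i = ∑ i, y i) : x = y := by
  rw [← sub_eq_zero]
  refine eq_zero_of_mulVec_eq_self_of_sum_eq_zero hM hpos ?_ ?_
  · simp only [sub_mulVec, one_mulVec] at h
    rw [mulVec_sub]
    linear_combination h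
  · simp [sum_sub_distrib, hsum]

/-- A square stand-in for the augmented matrix `[M - 1; 𝟏ᵀ]`. -/
def augment (M : Matrix ι ι ℝ) : Matrix ι ι ℝ := M - 1 + of fun _ _ => 1

theorem augment_mulVec (M : Matrix ι ι ℝ) (x : ι → ℝ) :
    augment M *ᵥ x = (M - 1) *ᵥ x + (∑ j, x j) • 1 := by
  rw [augment, add_mulVec]
  congr 1
  ext i
  simp [mulVec, dotProduct]

theorem sum_augment_mulVec (hM : M ∈ colStochastic ℝ ι) (x : ι → ℝ) :
    ∑ i, (augment M *ᵥ x) i = Fintype.card ι * ∑ i, x i := by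
  simp [augment_mulVec, sub_mulVec, sum_add_distrib, sum_sub_distrib,
    sum_mulVec_of_mem_colStochastic hM]

theorem augment_mulVec_eq_one_iff [Nonempty ι] (hM : M ∈ colStochastic ℝ ι) {x : ι → ℝ} :
    augment M *ᵥ x = 1 ↔ M *ᵥ x = x ∧ ∑ i, x i = 1 := by
  constructor
  · intro h
    have hsum : ∑ i, x i = 1 := by
      have := sum_augment_mulVec hM x
      simp only [h, Pi.one_apply, sum_const, card_univ, nsmul_eq_mul, mul_one] at this
      exact (mul_eq_left₀ (by positivity)).1 this.symm
    rw [augment_mulVec, hsum, one_smul, sub_mulVec, one_mulVec] at h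
    refine ⟨?_, hsum⟩
    linear_combination h
  · rintro ⟨hx, hsum⟩
    ext i
    simp [augment_mulVec, sub_mulVec, hx, hsum]

theorem augment_mulVec_injective [Nonempty ι] (hM : M ∈ colStochastic ℝ ι)
    (hpos : ∀ i j, 0 < M i j) : Function.Injective (augment M *ᵥ ·) := by
  intro x y (h : augment M *ᵥ x = augment M *ᵥ y)
  have hsum : ∑ i, x i = ∑ i, y i := by
    have := sum_augment_mulVec hM x
    rw [h, sum_augment_mulVec hM y] at this
    exact (mul_left_cancel₀ (by positivity) this).symm
  refine eq_of_sub_one_mulVec_eq_of_sum_eq hM hpos ?_ hsum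
  simpa [augment_mulVec, hsum] using h

noncomputable def mulVecCLM : Matrix ι ι ℝ →L[ℝ] (ι → ℝ) →L[ℝ] (ι → ℝ) :=
  LinearMap.toContinuousLinearMap (Matrix.toLin'.trans LinearMap.toContinuousLinearMap).toLinearMap

theorem isInvertible_mulVecCLM (h : Function.Injective (M *ᵥ ·)) : (mulVecCLM M).IsInvertible :=
  ⟨(LinearEquiv.ofInjectiveEndo (Matrix.mulVecLin M) h).toContinuousLinearEquiv, rfl⟩

/-- The solution of `augment M *ᵥ x = 1`; it is `0` when `augment M` is singular. -/
noncomputable def stationaryVec (M : Matrix ι ι ℝ) : ι → ℝ :=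
  (mulVecCLM (augment M)).inverse 1

theorem augment_mulVec_stationaryVec [Nonempty ι] (hM : M ∈ colStochastic ℝ ι)
    (hpos : ∀ i j, 0 < M i j) : augment M *ᵥ stationaryVec M = 1 :=
  (isInvertible_mulVecCLM (augment_mulVec_injective hM hpos)).self_apply_inverse 1

theorem mulVec_stationaryVec [Nonempty ι] (hM : M ∈ colStochastic ℝ ι)
    (hpos : ∀ i j, 0 < M i j) : M *ᵥ stationaryVec M = stationaryVec M :=
  ((augment_mulVec_eq_one_iff hM).1 (augment_mulVec_stationaryVec hM hpos)).1

theorem sum_stationaryVec [Nonempty ι] (hM : M ∈ colStochastic ℝ ι)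
    (hpos : ∀ i j, 0 < M i j) : ∑ i, stationaryVec M i = 1 :=
  ((augment_mulVec_eq_one_iff hM).1 (augment_mulVec_stationaryVec hM hpos)).2

theorem eq_stationaryVec [Nonempty ι] (hM : M ∈ colStochastic ℝ ι)
    (hpos : ∀ i j, 0 < M i j) {x : ι → ℝ} (hx : M *ᵥ x = x) (hsum : ∑ i, x i = 1) :
    x = stationaryVec M :=
  augment_mulVec_injective hM hpos <|
    ((augment_mulVec_eq_one_iff hM).2 ⟨hx, hsum⟩).trans (augment_mulVec_stationaryVec hM hpos).symm

variable {E : Type*} [NormedAddCommGroup E] [NormedSpace ℝ E]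

theorem _root_.ContDiffOn.stationaryVec [Nonempty ι] {A : E → Matrix ι ι ℝ} {s : Set E}
    {n : WithTop ℕ∞} (hA : ContDiffOn ℝ n A s) (hM : ∀ x ∈ s, A x ∈ colStochastic ℝ ι)
    (hpos : ∀ x ∈ s, ∀ i j, 0 < A x i j) : ContDiffOn ℝ n (fun x => stationaryVec (A x)) s := by
  have hB : ContDiffOn ℝ n (fun x => mulVecCLM (augment (A x))) s := by
    unfold augment
    exact mulVecCLM.contDiff.comp_contDiffOn ((hA.sub contDiffOn_const).add contDiffOn_const)
  intro x hx
  exact ((isInvertible_mulVecCLM (augment_mulVec_injective (hM x hx) (hpos x hx)))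
    |>.contDiffAt_map_inverse.comp_contDiffWithinAt x (hB x hx)).clm_apply contDiffWithinAt_const

theorem sub_one_mulVec_fderivWithin_of_mulVec_eq_self {A : E → Matrix ι ι ℝ} {ρ : E → ι → ℝ}
    {s : Set E} {x : E} (hs : UniqueDiffWithinAt ℝ s x) (hx : x ∈ s)
    (hA : DifferentiableWithinAt ℝ A s x) (hρ : DifferentiableWithinAt ℝ ρ s x)
    (hfix : ∀ y ∈ s, A y *ᵥ ρ y = ρ y) (v : E) :
    (A x - 1) *ᵥ fderivWithin ℝ ρ s x v = -(fderivWithin ℝ A s x v *ᵥ ρ x) := by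
  have hD := (mulVecCLM.hasFDerivAt.comp_hasFDerivWithinAt x hA.hasFDerivWithinAt).clm_apply
    hρ.hasFDerivWithinAt
  have h := congrArg (· v)
    ((hD.congr (fun y hy => (hfix y hy).symm) (hfix x hx).symm).fderivWithin hs)
  change _ = A x *ᵥ _ + fderivWithin ℝ A s x v *ᵥ ρ x at h
  rw [sub_mulVec, one_mulVec]
  linear_combination -h

end Matrix

theorem sum_fderivWithin_eq_zero_of_sum_eq {ι E : Type*} [Fintype ι] [NormedAddCommGroup E]
    [NormedSpace ℝ E] {ρ : E → ι → ℝ} {s : Set E} {x : E}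
    (hs : UniqueDiffWithinAt ℝ s x) (hx : x ∈ s) (hρ : DifferentiableWithinAt ℝ ρ s x) {c : ℝ}
    (hsum : ∀ y ∈ s, ∑ i, ρ y i = c) (v : E) : ∑ i, fderivWithin ℝ ρ s x v i = 0 := by
  have hD := HasFDerivWithinAt.fun_sum (u := univ) fun i _ =>
    (ContinuousLinearMap.proj i).hasFDerivAt.comp_hasFDerivWithinAt x hρ.hasFDerivWithinAt
  have h := congrArg (· v) (hs.eq hD ((hasFDerivWithinAt_const c x s).congr hsum (hsum x hx)))
  simpa using h

/-- Let `A(θ)` be a `C¹` matrix-valued function on an open set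
`Θ ⊆ ℝᵐ` such that `A(θ)` is column-stochastic with strictly positive entries for all
`θ ∈ Θ`.  Then for each `θ ∈ Θ` the system `A(θ)ρ = ρ`, `ρ·𝟏 = 1` has a unique solution
`ρ(θ)`; the map `θ ↦ ρ(θ)` is continuously differentiable on `Θ`; and for each `k` the
partial derivative `ζ_k(θ) = ∂_{θ_k} ρ(θ)` is the unique solution of
`(A(θ) − I) ζ_k = −(∂_{θ_k} A(θ)) ρ(θ)`, `ζ_k · 𝟏 = 0`. -/
theorem stmt3 (n m : ℕ) (hn : 0 < n)
    (Θ : Set (Fin m → ℝ)) (hΘ : IsOpen Θ)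
    (A : (Fin m → ℝ) → Matrix (Fin n) (Fin n) ℝ)
    (hA : ContDiffOn ℝ 1 A Θ)
    (hpos : ∀ θ ∈ Θ, ∀ i j, 0 < A θ i j)
    (hcol : ∀ θ ∈ Θ, ∀ j, ∑ i, A θ i j = 1) :
    ∃ ρ : (Fin m → ℝ) → (Fin n → ℝ),
      (∀ θ ∈ Θ,
        ((A θ).mulVec (ρ θ) = ρ θ ∧ ∑ i, ρ θ i = 1) ∧
        (∀ σ : Fin n → ℝ, (A θ).mulVec σ = σ → ∑ i, σ i = 1 → σ = ρ θ)) ∧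
      ContDiffOn ℝ 1 ρ Θ ∧
      (∀ θ ∈ Θ, ∀ k : Fin m,
        ((A θ - 1).mulVec (fderivWithin ℝ ρ Θ θ (Pi.single k 1)) =
            -((fderivWithin ℝ A Θ θ (Pi.single k 1)).mulVec (ρ θ)) ∧
          ∑ i, fderivWithin ℝ ρ Θ θ (Pi.single k 1) i = 0) ∧
        (∀ ζ : Fin n → ℝ,
          (A θ - 1).mulVec ζ = -((fderivWithin ℝ A Θ θ (Pi.single k 1)).mulVec (ρ θ)) →
          ∑ i, ζ i = 0 → ζ = fderivWithin ℝ ρ Θ θ (Pi.single k 1))) := by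
  have : Nonempty (Fin n) := ⟨⟨0, hn⟩⟩
  have hstoch : ∀ θ ∈ Θ, A θ ∈ colStochastic ℝ (Fin n) := fun θ hθ =>
    mem_colStochastic_iff_sum.2 ⟨fun i j => (hpos θ hθ i j).le, hcol θ hθ⟩
  have hfix θ (hθ : θ ∈ Θ) := mulVec_stationaryVec (hstoch θ hθ) (hpos θ hθ)
  have hsum θ (hθ : θ ∈ Θ) := sum_stationaryVec (hstoch θ hθ) (hpos θ hθ)
  have hρ : ContDiffOn ℝ 1 (fun θ => stationaryVec (A θ)) Θ := hA.stationaryVec hstoch hpos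
  refine ⟨fun θ => stationaryVec (A θ), fun θ hθ => ⟨⟨hfix θ hθ, hsum θ hθ⟩,
    fun σ => eq_stationaryVec (hstoch θ hθ) (hpos θ hθ)⟩, hρ, fun θ hθ k => ?_⟩
  have hΘθ : UniqueDiffWithinAt ℝ Θ θ := hΘ.uniqueDiffWithinAt hθ
  have hρθ := hρ.differentiableOn one_ne_zero θ hθ
  have hζ := sub_one_mulVec_fderivWithin_of_mulVec_eq_self hΘθ hθ
    (hA.differentiableOn one_ne_zero θ hθ) hρθ hfix (Pi.single k 1)
  have hζsum := sum_fderivWithin_eq_zero_of_sum_eq hΘθ hθ hρθ hsum (Pi.single k 1)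
  exact ⟨⟨hζ, hζsum⟩, fun ζ h h' => eq_of_sub_one_mulVec_eq_of_sum_eq (hstoch θ hθ) (hpos θ hθ)
    (h.trans hζ.symm) (h'.trans hζsum.symm)⟩
end

section
/- Under assumptions A1–A4, f(θ) = T_c(ρ(·,θ), ρ*) is locally semiconvex: with C₀ = ‖c‖_∞ ‖h‖₁, the function θ ↦ f(θ) + C₀|θ|²/2 is convex on convex subsets of Θ. -/
/-!
Write `θ = a θ₀ + b θ₁` and `D = a b |θ₀ - θ₁|² / 2`. By A4 the density `ρ(·,θ)` lies below the
mixture `a ρ(·,θ₀) + b ρ(·,θ₁)` up to an excess `|h| D`, of total mass at most `D ‖h‖₁`. Mixing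
couplings of the two endpoint densities with `ρ*` couples the mixture with `ρ*` at the mixed
cost. Keep the part of that coupling whose first marginal lies under `ρ(·,θ)`, and couple the
excess of `ρ(·,θ)` over the mixture independently with what is left of `ρ*`: as all marginals
live on `Ω`, this costs at most `‖c‖_∞ D ‖h‖₁`. Hence `f θ ≤ a f θ₀ + b f θ₁ + C₀ D`, which is
the convexity of `f + C₀ |θ|² / 2` because `a |θ₀|² + b |θ₁|² = |θ|² + 2 D`.
-/

open MeasureTheory Set Filter Finset

/-- The Kantorovich optimal transport cost between two measures. -/
noncomputable def Tc {X : Type*} [MeasurableSpace X] (c : X × X → ℝ)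
    (μ ν : Measure X) : ℝ :=
  sInf {r : ℝ | ∃ π : Measure (X × X),
    π.map Prod.fst = μ ∧ π.map Prod.snd = ν ∧ r = ∫ z, c z ∂π}

open scoped ENNReal

theorem le_mul_csInf_add_mul_csInf {S₀ S₁ : Set ℝ} (h₀ : S₀.Nonempty) (h₁ : S₁.Nonempty)
    {a b y : ℝ} (ha : 0 ≤ a) (hb : 0 ≤ b) (hy : ∀ r₀ ∈ S₀, ∀ r₁ ∈ S₁, y ≤ a * r₀ + b * r₁) :
    y ≤ a * sInf S₀ + b * sInf S₁ := by
  have h₀' : ∀ r₁ ∈ S₁, y - b * r₁ ≤ a * sInf S₀ := fun r₁ hr₁ => by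
    rw [← smul_eq_mul a, ← Real.sInf_smul_of_nonneg ha]
    refine le_csInf h₀.smul_set ?_
    rintro _ ⟨r₀, hr₀, rfl⟩
    linarith [hy r₀ hr₀ r₁ hr₁, smul_eq_mul a r₀]
  have h₁' : y - a * sInf S₀ ≤ b * sInf S₁ := by
    rw [← smul_eq_mul b, ← Real.sInf_smul_of_nonneg hb]
    refine le_csInf h₁.smul_set ?_
    rintro _ ⟨r₁, hr₁, rfl⟩
    linarith [h₀' r₁ hr₁, smul_eq_mul b r₁]
  linarith

section Coupling

variable {X : Type*} [MeasurableSpace X]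

theorem Tc_le_integral {c : X × X → ℝ} (hc : ∀ z, 0 ≤ c z) {μ ν : Measure X}
    {π : Measure (X × X)} (hπ₁ : π.map Prod.fst = μ) (hπ₂ : π.map Prod.snd = ν) :
    Tc c μ ν ≤ ∫ z, c z ∂π :=
  csInf_le ⟨0, fun _ ⟨_, _, _, hr⟩ => hr ▸ integral_nonneg hc⟩ ⟨π, hπ₁, hπ₂, rfl⟩

theorem le_mul_Tc_add_mul_Tc (c : X × X → ℝ) {μ₀ μ₁ ν : Measure X} [IsProbabilityMeasure μ₀]
    [IsProbabilityMeasure μ₁] [IsProbabilityMeasure ν] {a b y : ℝ} (ha : 0 ≤ a) (hb : 0 ≤ b)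
    (hy : ∀ π₀ π₁ : Measure (X × X), π₀.map Prod.fst = μ₀ → π₀.map Prod.snd = ν →
      π₁.map Prod.fst = μ₁ → π₁.map Prod.snd = ν → y ≤ a * ∫ z, c z ∂π₀ + b * ∫ z, c z ∂π₁) :
    y ≤ a * Tc c μ₀ ν + b * Tc c μ₁ ν := by
  unfold Tc
  refine le_mul_csInf_add_mul_csInf ?_ ?_ ha hb ?_
  · exact ⟨_, μ₀.prod ν, by simp, by simp, rfl⟩
  · exact ⟨_, μ₁.prod ν, by simp, by simp, rfl⟩
  · rintro _ ⟨π₀, h₀₁, h₀₂, rfl⟩ _ ⟨π₁, h₁₁, h₁₂, rfl⟩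
    exact hy π₀ π₁ h₀₁ h₀₂ h₁₁ h₁₂

theorem map_fst_apply_univ (π : Measure (X × X)) : π.map Prod.fst univ = π univ :=
  Measure.fst_univ

theorem map_snd_apply_univ (π : Measure (X × X)) : π.map Prod.snd univ = π univ :=
  Measure.snd_univ

theorem exists_map_fst_map_snd_eq {μ ν : Measure X} [IsFiniteMeasure μ] [IsFiniteMeasure ν]
    (h : μ univ = ν univ) : ∃ π : Measure (X × X), π.map Prod.fst = μ ∧ π.map Prod.snd = ν := by
  rcases eq_or_ne (μ univ) 0 with h0 | h0
  · refine ⟨0, ?_, ?_⟩ <;> simp [Measure.measure_univ_eq_zero.1 h0,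
      Measure.measure_univ_eq_zero.1 (h ▸ h0)]
  · refine ⟨(μ univ)⁻¹ • μ.prod ν, ?_, ?_⟩
    · rw [Measure.map_smul, Measure.map_fst_prod, smul_smul, ← h,
        ENNReal.inv_mul_cancel h0 (measure_ne_top μ univ), one_smul]
    · rw [Measure.map_smul, Measure.map_snd_prod, smul_smul,
        ENNReal.inv_mul_cancel h0 (measure_ne_top μ univ), one_smul]

theorem ae_norm_le_of_map_compl_eq_zero {c : X × X → ℝ} {Ω : Set X} {M : ℝ}
    (hcM : ∀ z ∈ Ω ×ˢ Ω, |c z| ≤ M) (hΩ : MeasurableSet Ω) {π : Measure (X × X)}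
    (h₁ : π.map Prod.fst Ωᶜ = 0) (h₂ : π.map Prod.snd Ωᶜ = 0) : ∀ᵐ z ∂π, ‖c z‖ ≤ M := by
  rw [Measure.map_apply measurable_fst hΩ.compl, measure_eq_zero_iff_ae_notMem] at h₁
  rw [Measure.map_apply measurable_snd hΩ.compl, measure_eq_zero_iff_ae_notMem] at h₂
  filter_upwards [h₁, h₂] with z hz₁ hz₂
  exact hcM z ⟨by simpa using hz₁, by simpa using hz₂⟩

theorem map_withDensity_comp {Y : Type*} [MeasurableSpace Y] (μ : Measure X) {f : X → Y}
    (hf : Measurable f) {g : Y → ℝ≥0∞} (hg : Measurable g) :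
    (μ.withDensity (g ∘ f)).map f = (μ.map f).withDensity g := by
  ext s hs
  rw [Measure.map_apply hf hs, withDensity_apply _ (hf hs), withDensity_apply _ hs,
    setLIntegral_map hs hg hf]
  rfl

theorem withDensity_apply_univ (μ : Measure X) (p : X → ℝ≥0∞) :
    μ.withDensity p univ = ∫⁻ x, p x ∂μ := by
  rw [withDensity_apply _ MeasurableSet.univ, Measure.restrict_univ]

theorem exists_le_map_fst_eq_withDensity {μ : Measure X} {q q' : X → ℝ≥0∞} (hq : Measurable q)
    (hq' : Measurable q') (hq'q : q' ≤ q) {π : Measure (X × X)} [IsFiniteMeasure π]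
    (hπ : π.map Prod.fst = μ.withDensity q) :
    ∃ π' ≤ π, π'.map Prod.fst = μ.withDensity q' := by
  have hq_lt_top : ∀ᵐ x ∂μ, q x < ∞ := by
    refine ae_lt_top hq ?_
    rw [← withDensity_apply_univ, ← hπ]
    exact measure_ne_top _ _
  -- Where `q x = 0` also `q' x = 0`, and `0 / 0 = 0` in `ℝ≥0∞`.
  refine ⟨π.withDensity ((q' / q) ∘ Prod.fst), ?_, ?_⟩
  · calc π.withDensity ((q' / q) ∘ Prod.fst) ≤ π.withDensity 1 :=
          withDensity_mono (ae_of_all _ fun z => ENNReal.div_le_of_le_mul (by simpa using hq'q z.1))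
      _ = π := withDensity_one
  · rw [map_withDensity_comp π measurable_fst (hq'.div hq), hπ, ← withDensity_mul _ hq (hq'.div hq)]
    refine withDensity_congr_ae (hq_lt_top.mono fun x hx => ?_)
    rcases eq_or_ne (q x) 0 with h0 | h0
    · simpa [h0, eq_comm] using hq'q x
    · exact ENNReal.mul_div_cancel h0 hx.ne

theorem exists_le_add_map_fst_eq_withDensity {μ ν : Measure X} {p q : X → ℝ≥0∞}
    (hp : Measurable p) (hq : Measurable q) {π : Measure (X × X)} [IsFiniteMeasure π]
    (hπ₁ : π.map Prod.fst = μ.withDensity q) (hπ₂ : π.map Prod.snd = ν)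
    (hp_mass : ∫⁻ x, p x ∂μ = ν univ) :
    ∃ π₁ ≤ π, ∃ π₂ : Measure (X × X), (π₁ + π₂).map Prod.fst = μ.withDensity p ∧
      (π₁ + π₂).map Prod.snd = ν ∧ π₂ univ = ∫⁻ x, p x - q x ∂μ := by
  obtain ⟨π₁, hle, hπ₁fst⟩ :=
    exists_le_map_fst_eq_withDensity hq (hp.min hq) (fun x => min_le_right _ _) hπ₁
  have : IsFiniteMeasure ν := hπ₂ ▸ inferInstance
  have : IsFiniteMeasure π₁ := isFiniteMeasure_of_le π hle
  have hν₁ : π₁.map Prod.snd ≤ ν := hπ₂ ▸ Measure.map_mono hle measurable_snd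
  have hsplit : (fun x => min (p x) (q x)) + (fun x => p x - q x) = p := by
    ext x
    rcases le_total (p x) (q x) with h | h
    · simp [h, tsub_eq_zero_of_le h]
    · simp [h, add_tsub_cancel_of_le h]
  have hmass : ∫⁻ x, min (p x) (q x) ∂μ + ∫⁻ x, p x - q x ∂μ = ν univ := by
    rw [← lintegral_add_left (hp.min hq), ← hp_mass]
    exact congrArg (fun g => ∫⁻ x, g x ∂μ) hsplit
  have hν₁_univ : π₁.map Prod.snd univ = ∫⁻ x, min (p x) (q x) ∂μ := by
    rw [map_snd_apply_univ, ← map_fst_apply_univ, hπ₁fst, withDensity_apply_univ]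
  have hrest_univ : (ν - π₁.map Prod.snd) univ = ∫⁻ x, p x - q x ∂μ := by
    rw [Measure.sub_apply MeasurableSet.univ hν₁, hν₁_univ, ← hmass,
      ENNReal.add_sub_cancel_left
        ((le_self_add.trans hmass.le).trans_lt (measure_lt_top ν univ)).ne]
  have : IsFiniteMeasure (μ.withDensity fun x => p x - q x) :=
    ⟨by rw [withDensity_apply_univ, ← hrest_univ]; exact measure_lt_top _ _⟩
  obtain ⟨π₂, h₂₁, h₂₂⟩ :=
    exists_map_fst_map_snd_eq ((withDensity_apply_univ μ _).trans hrest_univ.symm)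
  refine ⟨π₁, hle, π₂, ?_, ?_, ?_⟩
  · rw [Measure.map_add _ _ measurable_fst, hπ₁fst, h₂₁, ← withDensity_add_left (hp.min hq),
      hsplit]
  · rw [Measure.map_add _ _ measurable_snd, h₂₂, add_comm, Measure.sub_add_cancel_of_le hν₁]
  · rw [← map_fst_apply_univ, h₂₁, withDensity_apply_univ]

variable {c : X × X → ℝ} {Ω : Set X} {M : ℝ}

theorem Tc_withDensity_le_integral_add (hc : ∀ z, 0 ≤ c z) (hcm : Measurable c)
    (hcM : ∀ z ∈ Ω ×ˢ Ω, |c z| ≤ M) (hΩ : MeasurableSet Ω) {μ ν : Measure X}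
    {p q : X → ℝ≥0∞} (hp : Measurable p) (hq : Measurable q) {π : Measure (X × X)}
    [IsFiniteMeasure π] (hπ₁ : π.map Prod.fst = μ.withDensity q) (hπ₂ : π.map Prod.snd = ν)
    (hp_mass : ∫⁻ x, p x ∂μ = ν univ) (hpΩ : μ.withDensity p Ωᶜ = 0) (hνΩ : ν Ωᶜ = 0)
    (hcπ : Integrable c π) :
    Tc c (μ.withDensity p) ν ≤ ∫ z, c z ∂π + M * (∫⁻ x, p x - q x ∂μ).toReal := by
  obtain ⟨π₁, hle, π₂, h₁, h₂, hπ₂univ⟩ :=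
    exists_le_add_map_fst_eq_withDensity hp hq hπ₁ hπ₂ hp_mass
  have : IsFiniteMeasure π₂ := ⟨by
    rw [hπ₂univ]
    calc ∫⁻ x, p x - q x ∂μ ≤ ∫⁻ x, p x ∂μ := lintegral_mono fun x => tsub_le_self
      _ < ∞ := by rw [hp_mass, ← hπ₂, map_snd_apply_univ]; exact measure_lt_top π univ⟩
  have hbound := ae_norm_le_of_map_compl_eq_zero hcM hΩ (h₁ ▸ hpΩ) (h₂ ▸ hνΩ)
  rw [ae_add_measure_iff] at hbound
  have hc₂ : ∫ z, c z ∂π₂ ≤ M * (∫⁻ x, p x - q x ∂μ).toReal := by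
    rw [← hπ₂univ]
    exact (le_abs_self _).trans (norm_integral_le_of_norm_le_const hbound.2)
  calc Tc c (μ.withDensity p) ν ≤ ∫ z, c z ∂(π₁ + π₂) := Tc_le_integral hc h₁ h₂
    _ = ∫ z, c z ∂π₁ + ∫ z, c z ∂π₂ :=
      integral_add_measure (hcπ.mono_measure hle)
        (.of_bound hcm.aestronglyMeasurable M hbound.2)
    _ ≤ ∫ z, c z ∂π + M * (∫⁻ x, p x - q x ∂μ).toReal :=
      add_le_add (integral_mono_measure hle (ae_of_all _ hc) hcπ) hc₂

theorem Tc_le_mul_add_mul_add_of_eq_withDensity (hc : ∀ z, 0 ≤ c z) (hcm : Measurable c)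
    (hcM : ∀ z ∈ Ω ×ˢ Ω, |c z| ≤ M) (hΩ : MeasurableSet Ω) {μ ν μ₀ μ₁ μ' : Measure X}
    [IsProbabilityMeasure ν] [IsProbabilityMeasure μ₀] [IsProbabilityMeasure μ₁]
    [IsProbabilityMeasure μ'] (hνΩ : ν Ωᶜ = 0) (hμ₀Ω : μ₀ Ωᶜ = 0) (hμ₁Ω : μ₁ Ωᶜ = 0)
    (hμ'Ω : μ' Ωᶜ = 0) {p₀ p₁ p : X → ℝ≥0∞} (hp₀ : Measurable p₀) (hp₁ : Measurable p₁)
    (hp : Measurable p) (hμ₀ : μ₀ = μ.withDensity p₀) (hμ₁ : μ₁ = μ.withDensity p₁)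
    (hμ' : μ' = μ.withDensity p) {a b : ℝ} (ha : 0 ≤ a) (hb : 0 ≤ b) (hab : a + b = 1) :
    Tc c μ' ν ≤ a * Tc c μ₀ ν + b * Tc c μ₁ ν +
      M * (∫⁻ x, p x - (ENNReal.ofReal a * p₀ x + ENNReal.ofReal b * p₁ x) ∂μ).toReal := by
  rw [← sub_le_iff_le_add]
  refine le_mul_Tc_add_mul_Tc c ha hb fun π₀ π₁ h₀₁ h₀₂ h₁₁ h₁₂ => ?_
  have : IsFiniteMeasure π₀ := ⟨by rw [← map_snd_apply_univ, h₀₂]; exact measure_lt_top ν univ⟩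
  have : IsFiniteMeasure π₁ := ⟨by rw [← map_snd_apply_univ, h₁₂]; exact measure_lt_top ν univ⟩
  have hc₀ : Integrable c π₀ := .of_bound hcm.aestronglyMeasurable M
    (ae_norm_le_of_map_compl_eq_zero hcM hΩ (h₀₁ ▸ hμ₀Ω) (h₀₂ ▸ hνΩ))
  have hc₁ : Integrable c π₁ := .of_bound hcm.aestronglyMeasurable M
    (ae_norm_le_of_map_compl_eq_zero hcM hΩ (h₁₁ ▸ hμ₁Ω) (h₁₂ ▸ hνΩ))
  subst hμ₀ hμ₁ hμ'
  set π := ENNReal.ofReal a • π₀ + ENNReal.ofReal b • π₁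
  have hπ₁ : π.map Prod.fst = μ.withDensity (ENNReal.ofReal a • p₀ + ENNReal.ofReal b • p₁) := by
    rw [Measure.map_add _ _ measurable_fst, Measure.map_smul, Measure.map_smul, h₀₁, h₁₁,
      withDensity_add_left (hp₀.const_smul _), withDensity_smul _ hp₀, withDensity_smul _ hp₁]
  have hπ₂ : π.map Prod.snd = ν := by
    rw [Measure.map_add _ _ measurable_snd, Measure.map_smul, Measure.map_smul, h₀₂, h₁₂,
      ← add_smul, ← ENNReal.ofReal_add ha hb, hab, ENNReal.ofReal_one, one_smul]
  have : IsFiniteMeasure π := ⟨by rw [← map_snd_apply_univ, hπ₂]; exact measure_lt_top ν univ⟩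
  have hcπ : ∫ z, c z ∂π = a * ∫ z, c z ∂π₀ + b * ∫ z, c z ∂π₁ := by
    rw [integral_add_measure (hc₀.smul_measure ENNReal.ofReal_ne_top)
      (hc₁.smul_measure ENNReal.ofReal_ne_top), integral_smul_measure, integral_smul_measure,
      ENNReal.toReal_ofReal ha, ENNReal.toReal_ofReal hb, smul_eq_mul, smul_eq_mul]
  have hp_mass : ∫⁻ x, p x ∂μ = ν univ := by
    rw [← withDensity_apply_univ, measure_univ, measure_univ]
  have := Tc_withDensity_le_integral_add hc hcm hcM hΩ hp
    ((hp₀.const_smul _).add (hp₁.const_smul _)) hπ₁ hπ₂ hp_mass hμ'Ω hνΩ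
    ((hc₀.smul_measure ENNReal.ofReal_ne_top).add_measure (hc₁.smul_measure ENNReal.ofReal_ne_top))
  rw [hcπ] at this
  exact sub_le_iff_le_add.2 this

def IsProbabilityDensityOn (Ω : Set X) (μ : Measure X) (r : X → ℝ) : Prop :=
  (∀ x, 0 ≤ r x) ∧ ∫ x, r x ∂μ = 1 ∧ ∀ x ∉ Ω, r x = 0

namespace IsProbabilityDensityOn

variable {μ : Measure X} {r : X → ℝ}

theorem integrable (h : IsProbabilityDensityOn Ω μ r) : Integrable r μ :=
  .of_integral_ne_zero (h.2.1 ▸ one_ne_zero)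

theorem aemeasurable_ofReal (h : IsProbabilityDensityOn Ω μ r) :
    AEMeasurable (fun x => ENNReal.ofReal (r x)) μ :=
  h.integrable.aemeasurable.ennreal_ofReal

theorem isProbabilityMeasure_withDensity (h : IsProbabilityDensityOn Ω μ r) :
    IsProbabilityMeasure (μ.withDensity fun x => ENNReal.ofReal (r x)) :=
  ⟨by rw [withDensity_apply_univ, ← ofReal_integral_eq_lintegral_ofReal h.integrable
    (ae_of_all _ h.1), h.2.1, ENNReal.ofReal_one]⟩

theorem withDensity_compl (h : IsProbabilityDensityOn Ω μ r) (hΩ : MeasurableSet Ω) :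
    μ.withDensity (fun x => ENNReal.ofReal (r x)) Ωᶜ = 0 := by
  rw [withDensity_apply _ hΩ.compl]
  exact setLIntegral_eq_zero hΩ.compl fun x hx => by simp [h.2.2 x hx]

end IsProbabilityDensityOn

theorem Tc_withDensity_ofReal_le (hc : ∀ z, 0 ≤ c z) (hcm : Measurable c) (hM : 0 ≤ M)
    (hcM : ∀ z ∈ Ω ×ˢ Ω, |c z| ≤ M) (hΩ : MeasurableSet Ω) {μ ν : Measure X}
    [IsProbabilityMeasure ν] (hνΩ : ν Ωᶜ = 0) {r₀ r₁ r g : X → ℝ}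
    (h₀ : IsProbabilityDensityOn Ω μ r₀) (h₁ : IsProbabilityDensityOn Ω μ r₁)
    (h : IsProbabilityDensityOn Ω μ r) {a b : ℝ} (ha : 0 ≤ a) (hb : 0 ≤ b) (hab : a + b = 1)
    (hg : Integrable g μ) (hg0 : ∀ x, 0 ≤ g x) (hr : ∀ x, r x ≤ a * r₀ x + b * r₁ x + g x) :
    Tc c (μ.withDensity fun x => ENNReal.ofReal (r x)) ν ≤
      a * Tc c (μ.withDensity fun x => ENNReal.ofReal (r₀ x)) ν +
      b * Tc c (μ.withDensity fun x => ENNReal.ofReal (r₁ x)) ν + M * ∫ x, g x ∂μ := by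
  have := h₀.isProbabilityMeasure_withDensity
  have := h₁.isProbabilityMeasure_withDensity
  have := h.isProbabilityMeasure_withDensity
  have hm₀ := h₀.aemeasurable_ofReal
  have hm₁ := h₁.aemeasurable_ofReal
  have hm := h.aemeasurable_ofReal
  refine (Tc_le_mul_add_mul_add_of_eq_withDensity hc hcm hcM hΩ hνΩ (h₀.withDensity_compl hΩ)
    (h₁.withDensity_compl hΩ) (h.withDensity_compl hΩ) hm₀.measurable_mk hm₁.measurable_mk
    hm.measurable_mk (withDensity_congr_ae hm₀.ae_eq_mk) (withDensity_congr_ae hm₁.ae_eq_mk)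
    (withDensity_congr_ae hm.ae_eq_mk) ha hb hab).trans ?_
  gcongr
  refine ENNReal.toReal_le_of_le_ofReal (integral_nonneg hg0) ?_
  rw [ofReal_integral_eq_lintegral_ofReal hg (ae_of_all _ hg0)]
  refine lintegral_mono_ae ?_
  filter_upwards [hm₀.ae_eq_mk, hm₁.ae_eq_mk, hm.ae_eq_mk] with x hx₀ hx₁ hx
  rw [← hx₀, ← hx₁, ← hx, ← ENNReal.ofReal_mul ha, ← ENNReal.ofReal_mul hb,
    ← ENNReal.ofReal_add (mul_nonneg ha (h₀.1 x)) (mul_nonneg hb (h₁.1 x)),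
    ← ENNReal.ofReal_sub _ (add_nonneg (mul_nonneg ha (h₀.1 x)) (mul_nonneg hb (h₁.1 x)))]
  exact ENNReal.ofReal_le_ofReal (by linarith [hr x])

end Coupling

theorem mul_sum_sq_add_mul_sum_sq {ι : Type*} [Fintype ι] (x y : ι → ℝ) {a b : ℝ}
    (hab : a + b = 1) :
    a * ∑ i, x i ^ 2 + b * ∑ i, y i ^ 2 =
      ∑ i, (a • x + b • y) i ^ 2 + a * b * ∑ i, (x i - y i) ^ 2 := by
  simp only [Finset.mul_sum, ← Finset.sum_add_distrib, Pi.add_apply, Pi.smul_apply, smul_eq_mul]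
  refine Finset.sum_congr rfl fun i _ => ?_
  linear_combination (-(a * x i ^ 2 + b * y i ^ 2)) * hab

theorem stmt13_general (d m : ℕ)
    (Ω : Set (EuclideanSpace ℝ (Fin d))) (hΩ : IsCompact Ω)
    (Θ : Set (Fin m → ℝ))
    (ρ : EuclideanSpace ℝ (Fin d) → (Fin m → ℝ) → ℝ)
    (hρprob : ∀ θ ∈ Θ, (∀ x, 0 ≤ ρ x θ) ∧ (∫ x, ρ x θ) = 1 ∧ ∀ x ∉ Ω, ρ x θ = 0)
    (c : EuclideanSpace ℝ (Fin d) × EuclideanSpace ℝ (Fin d) → ℝ)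
    (hc : Continuous c) (hcnonneg : ∀ z, 0 ≤ c z)
    (ρstar : Measure (EuclideanSpace ℝ (Fin d)))
    (hρstar : IsProbabilityMeasure ρstar) (hρstarsupp : ρstar Ωᶜ = 0)
    (f : (Fin m → ℝ) → ℝ)
    (hf : ∀ θ, f θ = Tc c (volume.withDensity fun x => ENNReal.ofReal (ρ x θ)) ρstar)
    -- A4: local semiconvexity of `θ ↦ ρ(x,θ)` with Hessian bounded below by `−h(x)`
    (h : EuclideanSpace ℝ (Fin d) → ℝ) (hh : Integrable h)
    (hA4 : ∀ x, ∀ s ⊆ Θ, Convex ℝ s →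
      ConvexOn ℝ s (fun θ => ρ x θ + h x * (∑ i, θ i ^ 2) / 2))
    (C₀ : ℝ)
    (hC₀ : C₀ = sSup ((fun z => |c z|) '' (Ω ×ˢ Ω)) * ∫ x, |h x|) :
    ∀ s ⊆ Θ, Convex ℝ s →
      ConvexOn ℝ s (fun θ => f θ + C₀ * (∑ i, θ i ^ 2) / 2) := by
  intro s hsΘ hs
  set M := sSup ((fun z => |c z|) '' (Ω ×ˢ Ω))
  have hM : 0 ≤ M := Real.sSup_nonneg (by rintro _ ⟨z, -, rfl⟩; exact abs_nonneg _)
  have hcM : ∀ z ∈ Ω ×ˢ Ω, |c z| ≤ M := fun z hz =>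
    le_csSup ((hΩ.prod hΩ).image hc.abs).bddAbove ⟨z, hz, rfl⟩
  refine ⟨hs, fun θ₀ hθ₀ θ₁ hθ₁ a b ha hb hab => ?_⟩
  set D := a * b * (∑ i, (θ₀ i - θ₁ i) ^ 2) / 2
  have hD : 0 ≤ D := by positivity
  have hquad := mul_sum_sq_add_mul_sum_sq θ₀ θ₁ hab
  have hρ : ∀ x, ρ x (a • θ₀ + b • θ₁) ≤ a * ρ x θ₀ + b * ρ x θ₁ + |h x| * D := fun x => by
    have := (hA4 x s hsΘ hs).2 hθ₀ hθ₁ ha hb hab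
    simp only [smul_eq_mul] at this
    linear_combination this + (h x / 2) * hquad + mul_le_mul_of_nonneg_right (le_abs_self (h x)) hD
  have hf_le := Tc_withDensity_ofReal_le hcnonneg hc.measurable hM hcM
    hΩ.isClosed.measurableSet hρstarsupp (hρprob θ₀ (hsΘ hθ₀)) (hρprob θ₁ (hsΘ hθ₁))
    (hρprob _ (hsΘ (hs hθ₀ hθ₁ ha hb hab))) ha hb hab (hh.abs.mul_const D)
    (fun x => mul_nonneg (abs_nonneg _) hD) hρ
  rw [integral_mul_const, ← hf, ← hf, ← hf, ← mul_assoc, ← hC₀] at hf_le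
  simp only [smul_eq_mul]
  linear_combination hf_le - (C₀ / 2) * hquad

/-- Under A1–A4, `f(θ) = T_c(ρ(·,θ), ρ*)` is locally semiconvex:
with `C₀ = ‖c‖_∞ ‖h‖₁`, the map `θ ↦ f(θ) + C₀|θ|²/2` is convex on convex subsets
of `Θ`.  Here A4 is the local semiconvexity of `θ ↦ ρ(x,θ)` with `∇²_θ ρ ≥ −h`,
expressed by the convexity of `θ ↦ ρ(x,θ) + h(x)|θ|²/2` on convex subsets of `Θ`. -/
theorem stmt13 (d m : ℕ)
    (Ω : Set (EuclideanSpace ℝ (Fin d))) (hΩ : IsCompact Ω)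
    (Θ : Set (Fin m → ℝ)) (hΘ : IsOpen Θ)
    (ρ : EuclideanSpace ℝ (Fin d) → (Fin m → ℝ) → ℝ)
    (hρint : ∀ θ ∈ Θ, Integrable (fun x => ρ x θ))
    (hρprob : ∀ θ ∈ Θ, (∀ x, 0 ≤ ρ x θ) ∧ (∫ x, ρ x θ) = 1 ∧ ∀ x ∉ Ω, ρ x θ = 0)
    (η : EuclideanSpace ℝ (Fin d) → ℝ) (hη : Integrable η)
    (hρdiff : ∀ x, ∀ θ ∈ Θ, DifferentiableAt ℝ (ρ x) θ ∧ ‖fderiv ℝ (ρ x) θ‖ ≤ η x)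
    (c : EuclideanSpace ℝ (Fin d) × EuclideanSpace ℝ (Fin d) → ℝ)
    (hc : Continuous c) (hcnonneg : ∀ z, 0 ≤ c z)
    (ρstar : Measure (EuclideanSpace ℝ (Fin d)))
    (hρstar : IsProbabilityMeasure ρstar) (hρstarsupp : ρstar Ωᶜ = 0)
    (f : (Fin m → ℝ) → ℝ)
    (hf : ∀ θ, f θ = Tc c (volume.withDensity fun x => ENNReal.ofReal (ρ x θ)) ρstar)
    -- A4: local semiconvexity of `θ ↦ ρ(x,θ)` with Hessian bounded below by `−h(x)`
    (h : EuclideanSpace ℝ (Fin d) → ℝ) (hh : Integrable h) (hhpos : ∀ x, 0 ≤ h x)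
    (hA4 : ∀ x, ∀ s ⊆ Θ, Convex ℝ s →
      ConvexOn ℝ s (fun θ => ρ x θ + h x * (∑ i, θ i ^ 2) / 2))
    (C₀ : ℝ)
    (hC₀ : C₀ = sSup ((fun z => |c z|) '' (Ω ×ˢ Ω)) * ∫ x, |h x|) :
    ∀ s ⊆ Θ, Convex ℝ s →
      ConvexOn ℝ s (fun θ => f θ + C₀ * (∑ i, θ i ^ 2) / 2) :=
  stmt13_general d m Ω hΩ Θ ρ hρprob c hc hcnonneg ρstar hρstar hρstarsupp f hf h hh hA4 C₀ hC₀
end
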